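/- Let H be a real Hilbert space, V a closed vector subspace, A: H → 2^H maximally monotone, B monotone and L-Lipschitzian, C β-cocoercive, with zer(A + B + C + N_V) ≠ ∅. Let χ = 4β/(1 + √(1 + 16β²L²)), γ ∈ (0, χ), and (x₀, y₀) ∈ V × V⊥. Then the sequences generated by p_n = J_{γA}(x_n + γ y_n − γ P_V(B+C)x_n), r_n = P_V p_n, x_{n+1} = r_n + γ P_V(B x_n − B r_n), y_{n+1} = y_n − (p_n − r_n)/γ, satisfy: x_n ∈ V and y_n ∈ V⊥ for all n, and (x_n) converges weakly to some x̄ with 0 ∈ A x̄ + B x̄ + C x̄ + N_V x̄, while (y_n) converges weakly to some ȳ ∈ V⊥ ∩ (A x̄ + P_V(B+C) x̄). -/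

import Mathlib

open RealInnerProductSpace Pointwise Filter Topology

variable {H : Type*} [NormedAddCommGroup H] [InnerProductSpace ℝ H] [CompleteSpace H]

def MonotoneSV (A : H → Set H) : Prop :=
  ∀ x y u v, u ∈ A x → v ∈ A y → 0 ≤ ⟪x - y, u - v⟫

def MaxMonotoneSV (A : H → Set H) : Prop :=
  MonotoneSV A ∧ ∀ x u, (∀ y v, v ∈ A y → 0 ≤ ⟪x - y, u - v⟫) → u ∈ A x

/-- Normal cone to the closed subspace `V`. -/
def normalCone (V : Submodule ℝ H) : H → Set H := fun x => {u | x ∈ V ∧ u ∈ Vᗮ}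

/-- Weak convergence in a Hilbert space. -/
def WeakConv (x : ℕ → H) (xb : H) : Prop :=
  ∀ v : H, Tendsto (fun n => (⟪x n, v⟫ : ℝ)) atTop (𝓝 ⟪xb, v⟫)

/-!
Put `w n = x n + γ • y n`, `F = γ P_V B P_V`, `G = γ P_V C P_V`, and let `(γA)_V` be Spingarn's
partial inverse of `γA` with respect to `V`. In the variable `w` the method is
forward–backward–half-forward splitting for `0 ∈ (γA)_V w + F w + G w`, whose zeros are exactly
the `w` for which `x = P_V w`, `y = γ⁻¹ P_{V⊥} w` solve the problem. For such a zero `z`, each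
step decreases `‖w n - z‖²` by a positive multiple of `‖w n - q n‖² + ‖G (w n) - G z‖²`, where
`q n` is the backward point; the bound `γ < χ` is what makes the multiple positive. Hence
`w n - q n → 0` and `G (w n) → G z`, weak cluster points (taken along ultrafilters) are zeros by
weak–strong closedness of the graph of `(γA)_V + F`, and Opial's argument gives weak
convergence of `w n`, hence of its continuous linear images `x n` and `y n`.
-/

section Resolvent

variable {E : Type*} [NormedAddCommGroup E] [InnerProductSpace ℝ E]

def IsResolvent (M : E → Set E) (R : E → E) : Prop := ∀ z, z - R z ∈ M (R z)

variable {M : E → Set E} {R : E → E}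

lemma MonotoneSV.smul {A : E → Set E} (hA : MonotoneSV A) {γ : ℝ} (hγ : 0 ≤ γ) :
    MonotoneSV (fun x => γ • A x) := by
  rintro x y - - ⟨a, ha, rfl⟩ ⟨b, hb, rfl⟩
  rw [← smul_sub, real_inner_smul_right]
  exact mul_nonneg hγ (hA x y a b ha hb)

lemma IsResolvent.lipschitzWith_one (hM : MonotoneSV M) (hR : IsResolvent M R) :
    LipschitzWith 1 R := by
  refine LipschitzWith.of_dist_le_mul fun s s' => ?_
  rw [NNReal.coe_one, one_mul, dist_eq_norm, dist_eq_norm]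
  have hfirm : ‖R s - R s'‖ ^ 2 ≤ ⟪R s - R s', s - s'⟫ := by
    have h := hM _ _ _ _ (hR s) (hR s')
    rw [show s - R s - (s' - R s') = (s - s') - (R s - R s') by abel, inner_sub_right,
      real_inner_self_eq_norm_sq] at h
    linarith
  have hcs := real_inner_le_norm (R s - R s') (s - s')
  nlinarith [norm_nonneg (R s - R s'), norm_nonneg (s - s')]

/-- Maximality of `M + F` for a contraction `F`: test the hypothesis at the fixed point of
`v ↦ R (x + u - F v)`. -/
lemma IsResolvent.sub_mem_of_forall_inner_nonneg [CompleteSpace E] (hM : MonotoneSV M)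
    (hR : IsResolvent M R) {F : E → E} {K : NNReal} (hF : ContractingWith K F) {x u : E}
    (h : ∀ w v, v ∈ M w → 0 ≤ ⟪x - w, u - (v + F w)⟫) : u - F x ∈ M x := by
  have hΦ : ContractingWith K (fun v => R (x + u - F v)) := by
    refine ⟨hF.1, LipschitzWith.of_dist_le_mul fun v v' => ?_⟩
    calc dist (R (x + u - F v)) (R (x + u - F v'))
        ≤ dist (x + u - F v) (x + u - F v') := (hR.lipschitzWith_one hM).dist_le_mul _ _ |>.trans
          (by rw [NNReal.coe_one, one_mul])
      _ = dist (F v) (F v') := by rw [dist_eq_norm, dist_eq_norm, ← norm_neg]; congr 1; abel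
      _ ≤ K * dist v v' := hF.2.dist_le_mul v v'
  have : Nonempty E := ⟨0⟩
  set w := hΦ.fixedPoint _
  have hmem : x + u - F w - w ∈ M w := by
    have h := hR (x + u - F w)
    rwa [show R (x + u - F w) = w from hΦ.fixedPoint_isFixedPt] at h
  have hxw : x = w := by
    have h' := h w _ hmem
    rw [show u - (x + u - F w - w + F w) = -(x - w) by abel, inner_neg_right,
      real_inner_self_eq_norm_sq] at h'
    have : ‖x - w‖ = 0 := by nlinarith [norm_nonneg (x - w)]
    rwa [norm_sub_eq_zero_iff] at this
  rw [← hxw] at hmem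
  convert hmem using 1
  abel

lemma eq_of_forall_inner_sub_nonneg {G : E → E} {K : NNReal} (hG : LipschitzWith K G) {x c : E}
    (h : ∀ u, 0 ≤ ⟪x - u, c - G u⟫) : G x = c := by
  obtain ⟨g, rfl⟩ : ∃ g, c = g + G x := ⟨c - G x, by abel⟩
  suffices g = 0 by rw [this, zero_add]
  set t : ℝ := (2 * (K + 1))⁻¹
  have ht : 0 < t := by positivity
  have htK : t * K ≤ 1 / 2 := by
    rw [inv_mul_le_iff₀ (by positivity)]; linarith
  have hneg : ‖g‖ ^ 2 ≤ ⟪g, G (x + t • g) - G x⟫ := by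
    have h' := h (x + t • g)
    rw [show x - (x + t • g) = -(t • g) by abel, inner_neg_left, real_inner_smul_left,
      show g + G x - G (x + t • g) = g - (G (x + t • g) - G x) by abel, inner_sub_right,
      real_inner_self_eq_norm_sq] at h'
    nlinarith
  have hlip : ‖G (x + t • g) - G x‖ ≤ K * (t * ‖g‖) := by
    simpa [norm_smul, abs_of_pos ht] using hG.norm_sub_le (x + t • g) x
  have hcs := real_inner_le_norm g (G (x + t • g) - G x)
  have : ‖g‖ ^ 2 ≤ ‖g‖ ^ 2 / 2 := by
    nlinarith [norm_nonneg g, mul_le_mul_of_nonneg_left hlip (norm_nonneg g)]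
  exact norm_eq_zero.mp (by nlinarith [norm_nonneg g])

end Resolvent

section PartialInverse

variable {E : Type*} [NormedAddCommGroup E] [InnerProductSpace ℝ E]
  (V : Submodule ℝ E) [V.HasOrthogonalProjection]

@[simp]
lemma starProjection_starProjection (a : E) :
    V.starProjection (V.starProjection a) = V.starProjection a :=
  V.starProjection_eq_self_iff.mpr (V.starProjection_apply_mem a)

lemma inner_starProjection_add_sub_starProjection (a b : E) :
    ⟪V.starProjection a + (b - V.starProjection b), V.starProjection b + (a - V.starProjection a)⟫
      = ⟪a, b⟫ := by
  have hP : ∀ u v : E, ⟪V.starProjection u, v - V.starProjection v⟫ = 0 := fun u v =>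
    Submodule.inner_right_of_mem_orthogonal (V.starProjection_apply_mem u)
      (V.sub_starProjection_mem_orthogonal v)
  have hQ : ∀ u v : E, ⟪u - V.starProjection u, V.starProjection v⟫ = 0 := fun u v => by
    rw [real_inner_comm, hP]
  conv_rhs =>
    rw [← add_sub_cancel (V.starProjection a) a, ← add_sub_cancel (V.starProjection b) b]
  simp only [inner_add_left, inner_add_right, hP, hQ, real_inner_comm (b - V.starProjection b)]

/-- Spingarn's partial inverse of `T` with respect to `V`: its graph is the image of the graph
of `T` under `(x, u) ↦ (P x + Q u, P u + Q x)`, where `P`, `Q` project onto `V`, `Vᗮ`. -/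
def partialInverse (T : E → Set E) : E → Set E := fun w =>
  {v | V.starProjection v + (w - V.starProjection w)
    ∈ T (V.starProjection w + (v - V.starProjection v))}

lemma MonotoneSV.partialInverse {T : E → Set E} (hT : MonotoneSV T) :
    MonotoneSV (partialInverse V T) := by
  intro w w' v v' hv hv'
  have h := hT _ _ _ _ hv hv'
  have e₁ : V.starProjection w + (v - V.starProjection v)
      - (V.starProjection w' + (v' - V.starProjection v'))
      = V.starProjection (w - w') + ((v - v') - V.starProjection (v - v')) := by
    simp only [map_sub]; abel
  have e₂ : V.starProjection v + (w - V.starProjection w)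
      - (V.starProjection v' + (w' - V.starProjection w'))
      = V.starProjection (v - v') + ((w - w') - V.starProjection (w - w')) := by
    simp only [map_sub]; abel
  rwa [e₁, e₂, inner_starProjection_add_sub_starProjection] at h

noncomputable def partialResolvent (R : E → E) (s : E) : E :=
  V.starProjection (R s) + (s - R s - V.starProjection (s - R s))

lemma starProjection_partialResolvent (R : E → E) (s : E) :
    V.starProjection (partialResolvent V R s) = V.starProjection (R s) := by
  simp only [partialResolvent, map_add, map_sub, starProjection_starProjection]
  abel

lemma IsResolvent.partialInverse {T : E → Set E} {R : E → E} (hR : IsResolvent T R) :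
    IsResolvent (partialInverse V T) (partialResolvent V R) := by
  intro s
  have hPq := starProjection_partialResolvent V R s
  have e₁ : V.starProjection (s - partialResolvent V R s)
      + (partialResolvent V R s - V.starProjection (partialResolvent V R s)) = s - R s := by
    rw [map_sub, hPq]; simp only [partialResolvent, map_sub]; abel
  have e₂ : V.starProjection (partialResolvent V R s)
      + (s - partialResolvent V R s - V.starProjection (s - partialResolvent V R s)) = R s := by
    rw [map_sub, hPq]; simp only [partialResolvent, map_sub]; abel
  change _ ∈ T _
  rw [e₁, e₂]
  exact hR s

end PartialInverse

section WeakConvergence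

variable {E : Type*} [NormedAddCommGroup E] [InnerProductSpace ℝ E] {w q : ℕ → E} {a b : E}
  {l : Filter ℕ}

def WeakTendsto (w : ℕ → E) (l : Filter ℕ) (a : E) : Prop :=
  ∀ v : E, Tendsto (fun n => ⟪w n, v⟫) l (𝓝 ⟪a, v⟫)

lemma WeakTendsto.sub_const (h : WeakTendsto w l a) (u : E) :
    WeakTendsto (fun n => w n - u) l (a - u) := fun v => by
  simpa only [inner_sub_left] using (h v).sub_const ⟪u, v⟫

lemma WeakTendsto.of_tendsto_sub (h : WeakTendsto w l a)
    (hwq : Tendsto (fun n => w n - q n) l (𝓝 0)) : WeakTendsto q l a := fun v => by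
  simpa [inner_sub_left] using (h v).sub (hwq.inner (tendsto_const_nhds (x := v)))

lemma WeakTendsto.tendsto_inner (h : WeakTendsto w l a) {C : ℝ} (hb : ∀ᶠ n in l, ‖w n‖ ≤ C)
    {c : ℕ → E} (hc : Tendsto c l (𝓝 b)) : Tendsto (fun n => ⟪w n, c n⟫) l (𝓝 ⟪a, b⟫) := by
  have h0 : Tendsto (fun n => ⟪w n, c n - b⟫) l (𝓝 0) := by
    refine squeeze_zero_norm' ?_ (by simpa using (hc.sub_const b).norm.const_mul C)
    filter_upwards [hb] with n hn
    rw [Real.norm_eq_abs]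
    exact (abs_real_inner_le_norm _ _).trans (mul_le_mul_of_nonneg_right hn (norm_nonneg _))
  simpa [inner_sub_right] using (h b).add h0

/-- Banach–Alaoglu, through the Riesz isomorphism. -/
lemma exists_weakTendsto_of_norm_le [CompleteSpace E] (U : Ultrafilter ℕ) {C : ℝ}
    (hb : ∀ n, ‖w n‖ ≤ C) : ∃ a, WeakTendsto w (U : Filter ℕ) a := by
  let φ : ℕ → WeakDual ℝ E := fun n => StrongDual.toWeakDual (InnerProductSpace.toDual ℝ E (w n))
  obtain ⟨ψ, -, hψ⟩ := (WeakDual.isCompact_closedBall (𝕜 := ℝ) 0 C).ultrafilter_le_nhds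
    (U.map φ) (by
      rw [le_principal_iff, Ultrafilter.mem_coe, Ultrafilter.mem_map]
      exact univ_mem' fun n => by simpa [φ] using hb n)
  refine ⟨(InnerProductSpace.toDual ℝ E).symm (WeakDual.toStrongDual ψ), fun v => ?_⟩
  rw [InnerProductSpace.toDual_symm_apply]
  exact ((WeakDual.eval_continuous v).tendsto ψ).comp hψ

/-- The polarisation identity makes `⟪w n, a - b⟫` converge along `atTop`. -/
lemma WeakTendsto.eq_of_tendsto_norm_sub_sq {l' : Filter ℕ} [l.NeBot] [l'.NeBot]
    (hl : l ≤ atTop) (hl' : l' ≤ atTop) (ha : WeakTendsto w l a) (hb : WeakTendsto w l' b)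
    {ca cb : ℝ} (hca : Tendsto (fun n => ‖w n - a‖ ^ 2) atTop (𝓝 ca))
    (hcb : Tendsto (fun n => ‖w n - b‖ ^ 2) atTop (𝓝 cb)) : a = b := by
  have hpol : ∀ u, ⟪u, a - b⟫ = (‖u - b‖ ^ 2 - ‖u - a‖ ^ 2 - ‖b‖ ^ 2 + ‖a‖ ^ 2) / 2 := by
    intro u
    rw [norm_sub_sq_real, norm_sub_sq_real, inner_sub_right]
    ring
  have hlim : Tendsto (fun n => ⟪w n, a - b⟫) atTop
      (𝓝 ((cb - ca - ‖b‖ ^ 2 + ‖a‖ ^ 2) / 2)) := by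
    simp only [hpol]
    exact ((((hcb.sub hca).sub_const _).add_const _)).div_const 2
  have h₁ := tendsto_nhds_unique (ha (a - b)) (hlim.mono_left hl)
  have h₂ := tendsto_nhds_unique (hb (a - b)) (hlim.mono_left hl')
  have : ‖a - b‖ ^ 2 = 0 := by
    rw [← real_inner_self_eq_norm_sq, inner_sub_left, h₁, h₂, sub_self]
  exact sub_eq_zero.mp (norm_eq_zero.mp (pow_eq_zero_iff two_ne_zero |>.mp this))

/-- Opial's lemma, with weak cluster points taken along ultrafilters. -/
lemma exists_weakConv_of_tendsto_norm_sub_sq [CompleteSpace E] {S : Set E} {C : ℝ}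
    (hb : ∀ n, ‖w n‖ ≤ C)
    (hS : ∀ z ∈ S, ∃ c, Tendsto (fun n => ‖w n - z‖ ^ 2) atTop (𝓝 c))
    (hclust : ∀ U : Ultrafilter ℕ, (U : Filter ℕ) ≤ atTop → ∀ a, WeakTendsto w U a → a ∈ S) :
    ∃ a ∈ S, WeakConv w a := by
  obtain ⟨a, ha⟩ := exists_weakTendsto_of_norm_le (Ultrafilter.of atTop) hb
  have haS := hclust _ (Ultrafilter.of_le _) a ha
  refine ⟨a, haS, fun v => (tendsto_iff_ultrafilter _ _ _).mpr fun U hU => ?_⟩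
  obtain ⟨b, hb'⟩ := exists_weakTendsto_of_norm_le U hb
  obtain ⟨ca, hca⟩ := hS a haS
  obtain ⟨cb, hcb⟩ := hS b (hclust U hU b hb')
  rw [ha.eq_of_tendsto_norm_sub_sq (Ultrafilter.of_le _) hU hb' hca hcb]
  exact hb' v

lemma WeakConv.map [CompleteSpace E] (h : WeakConv w a) (T : E →L[ℝ] E) :
    WeakConv (fun n => T (w n)) (T a) := fun v => by
  simpa only [ContinuousLinearMap.adjoint_inner_right] using h (ContinuousLinearMap.adjoint T v)

end WeakConvergence

section Sequences

variable {E : Type*} [NormedAddCommGroup E]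

lemma tendsto_zero_of_add_le {a b : ℕ → ℝ} {c : ℝ} (hb : ∀ n, 0 ≤ b n)
    (h : ∀ n, a (n + 1) + b n ≤ a n) (ha : Tendsto a atTop (𝓝 c)) :
    Tendsto b atTop (𝓝 0) :=
  squeeze_zero hb (fun n => by linarith [h n] : ∀ n, b n ≤ a n - a (n + 1))
    (by simpa using ha.sub (ha.comp (tendsto_add_atTop_nat 1)))

lemma tendsto_zero_of_mul_norm_sq {v : ℕ → E} {l : Filter ℕ} {K : ℝ} (hK : 0 < K)
    (h : Tendsto (fun n => K * ‖v n‖ ^ 2) l (𝓝 0)) : Tendsto v l (𝓝 0) := by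
  rw [tendsto_zero_iff_norm_tendsto_zero]
  simpa [hK.ne', Real.sqrt_sq (norm_nonneg _)] using (h.div_const K).sqrt

end Sequences

section ForwardBackwardHalfForward

variable {E : Type*} [NormedAddCommGroup E] [InnerProductSpace ℝ E]
  {M : E → Set E} {R F G : E → E} {ℓ β : ℝ} {w q : ℕ → E}

lemma lipschitzWith_of_cocoercive (hβ : 0 < β)
    (hG : ∀ a b, β * ‖G a - G b‖ ^ 2 ≤ ⟪a - b, G a - G b⟫) :
    LipschitzWith (Real.toNNReal β⁻¹) G := by
  refine LipschitzWith.of_dist_le' fun a b => ?_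
  rw [dist_eq_norm, dist_eq_norm, le_inv_mul_iff₀ hβ]
  have h := (hG a b).trans (real_inner_le_norm _ _)
  rcases (norm_nonneg (G a - G b)).eq_or_lt with h0 | h0
  · rw [← h0, mul_zero]; exact norm_nonneg _
  · nlinarith

/-- The energy estimate behind one forward–backward–half-forward step, written for
`u = F w - F q` and `d = G w - G z`. -/
lemma norm_add_sub_sq_le_of_inner_nonneg {w q u d z : E} {ε : ℝ} (hε : 0 < ε)
    (hmono : 0 ≤ ⟪q - z, (w - q) - u - d⟫) (hd : β * ‖d‖ ^ 2 ≤ ⟪w - z, d⟫)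
    (hu : ‖u‖ ≤ ℓ * ‖w - q‖) :
    ‖q + u - z‖ ^ 2
      ≤ ‖w - z‖ ^ 2 - (1 - ℓ ^ 2 - ε⁻¹) * ‖w - q‖ ^ 2 - (2 * β - ε) * ‖d‖ ^ 2 := by
  have hqz : q - z = (w - z) - (w - q) := by abel
  have e₁ : ‖q + u - z‖ ^ 2 = ‖q - z‖ ^ 2 + 2 * ⟪q - z, u⟫ + ‖u‖ ^ 2 := by
    rw [add_sub_right_comm]; exact norm_add_sq_real _ _
  have e₂ : ‖q - z‖ ^ 2 = ‖w - z‖ ^ 2 - 2 * ⟪w - z, w - q⟫ + ‖w - q‖ ^ 2 := by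
    rw [hqz, norm_sub_sq_real]
  have e₃ : ⟪q - z, (w - q) - u - d⟫ = ⟪q - z, w - q⟫ - ⟪q - z, u⟫ - ⟪q - z, d⟫ := by
    rw [inner_sub_right, inner_sub_right]
  have e₄ : ⟪q - z, w - q⟫ = ⟪w - z, w - q⟫ - ‖w - q‖ ^ 2 := by
    rw [hqz, inner_sub_left, real_inner_self_eq_norm_sq]
  have e₅ : ⟪q - z, d⟫ = ⟪w - z, d⟫ - ⟪w - q, d⟫ := by
    rw [hqz, inner_sub_left]
  have hcs : ⟪w - q, d⟫ ≤ ‖w - q‖ * ‖d‖ := real_inner_le_norm _ _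
  -- Young's inequality
  have hyoung : 2 * (‖w - q‖ * ‖d‖) ≤ ε⁻¹ * ‖w - q‖ ^ 2 + ε * ‖d‖ ^ 2 := by
    have h : ε⁻¹ * ‖w - q‖ ^ 2 + ε * ‖d‖ ^ 2 - 2 * (‖w - q‖ * ‖d‖)
        = ε⁻¹ * (‖w - q‖ - ε * ‖d‖) ^ 2 := by
      field_simp; ring
    nlinarith [mul_nonneg (inv_pos.mpr hε).le (sq_nonneg (‖w - q‖ - ε * ‖d‖))]
  have hu2 : ‖u‖ ^ 2 ≤ ℓ ^ 2 * ‖w - q‖ ^ 2 := by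
    rw [← mul_pow]; exact pow_le_pow_left₀ (norm_nonneg _) hu 2
  nlinarith

/-- Weak–strong closedness of the graph of `M + F`. -/
lemma sub_mem_of_weakTendsto [CompleteSpace E] {l : Filter ℕ} [l.NeBot] (hM : MonotoneSV M)
    (hR : IsResolvent M R) (hFmono : ∀ a b, 0 ≤ ⟪a - b, F a - F b⟫) {K : NNReal}
    (hF : ContractingWith K F) {c : ℕ → E} {a b : E} {C : ℝ} (hqa : WeakTendsto q l a)
    (hqC : ∀ᶠ n in l, ‖q n‖ ≤ C) (hc : Tendsto c l (𝓝 b)) (hmem : ∀ n, c n - F (q n) ∈ M (q n)) :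
    b - F a ∈ M a := by
  refine hR.sub_mem_of_forall_inner_nonneg hM hF fun w' v' hv' => ?_
  have hbound : ∀ᶠ n in l, ‖q n - w'‖ ≤ C + ‖w'‖ := by
    filter_upwards [hqC] with n hn using (norm_sub_le _ _).trans (by linarith)
  refine ge_of_tendsto ((hqa.sub_const w').tendsto_inner hbound (hc.sub_const (v' + F w')))
    (Eventually.of_forall fun n => ?_)
  have h₁ := hM _ _ _ _ (hmem n) hv'
  have h₂ := hFmono (q n) w'
  rw [show c n - (v' + F w') = (c n - F (q n) - v') + (F (q n) - F w') by abel, inner_add_right]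
  linarith

variable (hM : MonotoneSV M) (hR : IsResolvent M R)
  (hFmono : ∀ a b, 0 ≤ ⟪a - b, F a - F b⟫)
  (hG : ∀ a b, β * ‖G a - G b‖ ^ 2 ≤ ⟪a - b, G a - G b⟫) (hβ : 0 < β)
  (hq : ∀ n, q n = R (w n - F (w n) - G (w n)))
include hM hR hFmono hG hβ hq

lemma fbhf_fejer (hFlip : ∀ a b, ‖F a - F b‖ ≤ ℓ * ‖a - b‖) (hstep : ℓ ^ 2 + (2 * β)⁻¹ < 1)
    (hw : ∀ n, w (n + 1) = q n + (F (w n) - F (q n))) :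
    ∃ K > 0, ∃ κ > 0, ∀ z, -(F z + G z) ∈ M z → ∀ n,
      ‖w (n + 1) - z‖ ^ 2 + (K * ‖w n - q n‖ ^ 2 + κ * ‖G (w n) - G z‖ ^ 2) ≤ ‖w n - z‖ ^ 2 := by
  set K := (1 - ℓ ^ 2 - (2 * β)⁻¹) / 2
  have hK : 0 < K := by simp only [K]; linarith
  -- with `ε⁻¹ = (2β)⁻¹ + K` the energy estimate has coefficients `K` and `2β - ε > 0`
  set ε := ((2 * β)⁻¹ + K)⁻¹
  have hε : 0 < ε := by positivity
  have hε2β : ε < 2 * β := by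
    simpa [ε] using inv_strictAnti₀ (by positivity) (lt_add_of_pos_right (2 * β)⁻¹ hK)
  refine ⟨K, hK, 2 * β - ε, by linarith, fun z hz n => ?_⟩
  have hmono : 0 ≤ ⟪q n - z, (w n - q n) - (F (w n) - F (q n)) - (G (w n) - G z)⟫ := by
    have hMq : w n - F (w n) - G (w n) - q n ∈ M (q n) := by rw [hq n]; exact hR _
    have h₁ := hM _ _ _ _ hMq hz
    have h₂ := hFmono (q n) z
    rw [show (w n - q n) - (F (w n) - F (q n)) - (G (w n) - G z)
      = (w n - F (w n) - G (w n) - q n - -(F z + G z)) + (F (q n) - F z) by abel,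
      inner_add_right]
    linarith
  have h := norm_add_sub_sq_le_of_inner_nonneg hε hmono (hG (w n) z) (hFlip (w n) (q n))
  rw [← hw n, show 1 - ℓ ^ 2 - ε⁻¹ = K by simp only [ε, K, inv_inv]; ring] at h
  linarith

lemma fbhf_mem_of_weakTendsto [CompleteSpace E] {l : Filter ℕ} [l.NeBot] {K : NNReal}
    (hF : ContractingWith K F) {C : ℝ} (hwC : ∀ n, ‖w n‖ ≤ C) {a g : E} (hwa : WeakTendsto w l a)
    (hwq : Tendsto (fun n => w n - q n) l (𝓝 0)) (hGw : Tendsto (fun n => G (w n)) l (𝓝 g)) :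
    -(F a + G a) ∈ M a := by
  have hGa : G a = g := by
    refine eq_of_forall_inner_sub_nonneg (lipschitzWith_of_cocoercive hβ hG) fun u => ?_
    have hbound : ∀ᶠ n in l, ‖w n - u‖ ≤ C + ‖u‖ :=
      Eventually.of_forall fun n => (norm_sub_le _ _).trans (by linarith [hwC n])
    exact ge_of_tendsto ((hwa.sub_const u).tendsto_inner hbound (hGw.sub_const (G u)))
      (Eventually.of_forall fun n => (mul_nonneg hβ.le (sq_nonneg _)).trans (hG _ _))
  have hqC : ∀ᶠ n in l, ‖q n‖ ≤ C + 1 := by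
    filter_upwards [(tendsto_norm_zero.comp hwq).eventually (gt_mem_nhds one_pos)] with n hn
    calc ‖q n‖ ≤ ‖w n‖ + ‖w n - q n‖ := by
          rw [← norm_neg (w n - q n), neg_sub]; exact norm_le_norm_add_norm_sub' _ _
      _ ≤ C + 1 := add_le_add (hwC n) hn.le
  have hFwq : Tendsto (fun n => F (w n) - F (q n)) l (𝓝 0) :=
    squeeze_zero_norm (fun n => hF.2.norm_sub_le _ _) (by simpa using hwq.norm.const_mul (K : ℝ))
  have hmem : ∀ n, (w n - q n) - (F (w n) - F (q n)) - G (w n) - F (q n) ∈ M (q n) := by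
    intro n
    have h := hR (w n - F (w n) - G (w n))
    rw [← hq n] at h
    convert h using 1
    abel
  have h := sub_mem_of_weakTendsto hM hR hFmono hF (hwa.of_tendsto_sub hwq) hqC
    (by simpa using (hwq.sub hFwq).sub hGw) hmem
  rwa [show -g - F a = -(F a + G a) by rw [hGa]; abel] at h

theorem fbhf_weakConv [CompleteSpace E] (hFlip : ∀ a b, ‖F a - F b‖ ≤ ℓ * ‖a - b‖)
    (hstep : ℓ ^ 2 + (2 * β)⁻¹ < 1) (hw : ∀ n, w (n + 1) = q n + (F (w n) - F (q n)))
    (hzer : ∃ z, -(F z + G z) ∈ M z) :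
    ∃ a, -(F a + G a) ∈ M a ∧ WeakConv w a := by
  obtain ⟨K, hK, κ, hκ, hfejer⟩ := fbhf_fejer hM hR hFmono hG hβ hq hFlip hstep hw
  have hanti : ∀ z, -(F z + G z) ∈ M z → Antitone fun n => ‖w n - z‖ ^ 2 := fun z hz =>
    antitone_nat_of_succ_le fun n => by
      nlinarith [hfejer z hz n, sq_nonneg ‖w n - q n‖, sq_nonneg ‖G (w n) - G z‖]
  have hconv : ∀ z, -(F z + G z) ∈ M z → ∃ c, Tendsto (fun n => ‖w n - z‖ ^ 2) atTop (𝓝 c) :=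
    fun z hz => ⟨_, tendsto_atTop_ciInf (hanti z hz) ⟨0, by rintro _ ⟨n, rfl⟩; positivity⟩⟩
  obtain ⟨z, hz⟩ := hzer
  obtain ⟨c, hc⟩ := hconv z hz
  have hwq : Tendsto (fun n => w n - q n) atTop (𝓝 0) := by
    refine tendsto_zero_of_mul_norm_sq hK (tendsto_zero_of_add_le (fun n => by positivity)
      (fun n => ?_) hc)
    nlinarith [hfejer z hz n, sq_nonneg ‖G (w n) - G z‖]
  have hGw : Tendsto (fun n => G (w n) - G z) atTop (𝓝 0) := by
    refine tendsto_zero_of_mul_norm_sq hκ (tendsto_zero_of_add_le (fun n => by positivity)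
      (fun n => ?_) hc)
    nlinarith [hfejer z hz n, sq_nonneg ‖w n - q n‖]
  have hwC : ∀ n, ‖w n‖ ≤ ‖z‖ + ‖w 0 - z‖ := fun n =>
    (norm_le_norm_add_norm_sub' _ z).trans <| add_le_add_right
      ((pow_le_pow_iff_left₀ (norm_nonneg _) (norm_nonneg _) two_ne_zero).mp
        (hanti z hz (Nat.zero_le n))) _
  have hF : ContractingWith ℓ.toNNReal F := by
    refine ⟨Real.toNNReal_lt_one.mpr ?_, LipschitzWith.of_dist_le' fun a b => ?_⟩
    · nlinarith [inv_pos.mpr (mul_pos two_pos hβ)]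
    · simpa only [dist_eq_norm] using hFlip a b
  exact exists_weakConv_of_tendsto_norm_sub_sq hwC hconv
    fun U hU a hwa => fbhf_mem_of_weakTendsto hM hR hFmono hG hβ hq hF hwC hwa
      (hwq.mono_left hU) (by simpa using (hGw.add_const (G z)).mono_left hU)

end ForwardBackwardHalfForward

section ForwardPartialInverseHalfForward

variable {E : Type*} [NormedAddCommGroup E] [InnerProductSpace ℝ E]
  (V : Submodule ℝ E) [V.HasOrthogonalProjection] {γ : ℝ}

lemma starProjection_add_smul {x y : E} (hx : x ∈ V) (hy : y ∈ Vᗮ) (c : ℝ) :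
    V.starProjection (x + c • y) = x := by
  rw [map_add, map_smul, V.starProjection_eq_self_iff.mpr hx,
    V.starProjection_apply_eq_zero_iff.mpr hy, smul_zero, add_zero]

noncomputable def compress (γ : ℝ) (B : E → E) (u : E) : E :=
  γ • V.starProjection (B (V.starProjection u))

lemma inner_sub_compress (B : E → E) (a b : E) :
    ⟪a - b, compress V γ B a - compress V γ B b⟫
      = γ * ⟪V.starProjection a - V.starProjection b,
          B (V.starProjection a) - B (V.starProjection b)⟫ := by
  rw [compress, compress, ← smul_sub, ← map_sub, real_inner_smul_right,
    ← V.inner_starProjection_left_eq_right, map_sub]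

lemma norm_compress_sub_le (hγ : 0 ≤ γ) (B : E → E) (a b : E) :
    ‖compress V γ B a - compress V γ B b‖
      ≤ γ * ‖B (V.starProjection a) - B (V.starProjection b)‖ := by
  rw [compress, compress, ← smul_sub, ← map_sub, norm_smul, Real.norm_of_nonneg hγ]
  exact mul_le_mul_of_nonneg_left (V.norm_starProjection_apply_le _) hγ

lemma compress_monotone (hγ : 0 ≤ γ) {B : E → E} (hB : ∀ x y, 0 ≤ ⟪x - y, B x - B y⟫)
    (a b : E) : 0 ≤ ⟪a - b, compress V γ B a - compress V γ B b⟫ := by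
  rw [inner_sub_compress]
  exact mul_nonneg hγ (hB _ _)

lemma compress_lipschitz (hγ : 0 ≤ γ) {B : E → E} {L : ℝ} (hL : 0 ≤ L)
    (hB : ∀ x y, ‖B x - B y‖ ≤ L * ‖x - y‖) (a b : E) :
    ‖compress V γ B a - compress V γ B b‖ ≤ γ * L * ‖a - b‖ := by
  calc _ ≤ γ * ‖B (V.starProjection a) - B (V.starProjection b)‖ := norm_compress_sub_le V hγ B a b
    _ ≤ γ * (L * ‖V.starProjection (a - b)‖) := by
        rw [map_sub]; exact mul_le_mul_of_nonneg_left (hB _ _) hγ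
    _ ≤ γ * L * ‖a - b‖ := by
        rw [← mul_assoc]
        exact mul_le_mul_of_nonneg_left (V.norm_starProjection_apply_le _) (mul_nonneg hγ hL)

lemma compress_cocoercive (hγ : 0 < γ) {C : E → E} {β : ℝ} (hβ : 0 ≤ β)
    (hC : ∀ x y, β * ‖C x - C y‖ ^ 2 ≤ ⟪x - y, C x - C y⟫) (a b : E) :
    β / γ * ‖compress V γ C a - compress V γ C b‖ ^ 2
      ≤ ⟪a - b, compress V γ C a - compress V γ C b⟫ := by
  have h := norm_compress_sub_le V hγ.le C a b
  have h' := hC (V.starProjection a) (V.starProjection b)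
  rw [inner_sub_compress]
  calc β / γ * ‖compress V γ C a - compress V γ C b‖ ^ 2
      ≤ β / γ * (γ * ‖C (V.starProjection a) - C (V.starProjection b)‖) ^ 2 := by
        gcongr
    _ = γ * (β * ‖C (V.starProjection a) - C (V.starProjection b)‖ ^ 2) := by
        field_simp
    _ ≤ _ := mul_le_mul_of_nonneg_left h' hγ.le

lemma neg_compress_mem_partialInverse_iff (hγ : γ ≠ 0) {A : E → Set E} {B C : E → E} (w : E) :
    -(compress V γ B w + compress V γ C w) ∈ partialInverse V (fun u => γ • A u) w
      ↔ γ⁻¹ • (w - V.starProjection w)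
          - V.starProjection (B (V.starProjection w) + C (V.starProjection w))
        ∈ A (V.starProjection w) := by
  set v := -(compress V γ B w + compress V γ C w)
  have hv : V.starProjection v = v :=
    V.starProjection_eq_self_iff.mpr <| V.neg_mem <|
      V.add_mem (V.smul_mem _ (V.starProjection_apply_mem _))
        (V.smul_mem _ (V.starProjection_apply_mem _))
  have hγv : γ⁻¹ • (v + (w - V.starProjection w)) = γ⁻¹ • (w - V.starProjection w)
      - V.starProjection (B (V.starProjection w) + C (V.starProjection w)) := by
    simp only [v, compress, map_add, smul_add, smul_neg, smul_smul, inv_mul_cancel₀ hγ, one_smul]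
    abel
  change V.starProjection v + _ ∈ γ • A (_ + (v - V.starProjection v)) ↔ _
  rw [hv, sub_self, add_zero, Set.mem_smul_set_iff_inv_smul_mem₀ hγ, hγv]

lemma exists_mem_normalCone_iff {A : E → Set E} {B C : E → E} {x : E} :
    (∃ a n, a ∈ A x ∧ n ∈ normalCone V x ∧ a + B x + C x + n = 0)
      ↔ x ∈ V ∧ ∃ y ∈ Vᗮ, y - V.starProjection (B x + C x) ∈ A x := by
  have hQ := V.sub_starProjection_mem_orthogonal (B x + C x)
  constructor
  · rintro ⟨a, n, ha, ⟨hx, hn⟩, hsum⟩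
    refine ⟨hx, a + V.starProjection (B x + C x), ?_, by rwa [add_sub_cancel_right]⟩
    rw [show a + V.starProjection (B x + C x)
        = -(B x + C x - V.starProjection (B x + C x)) - n by
      rw [← sub_eq_zero, ← hsum]; abel]
    exact Vᗮ.sub_mem (Vᗮ.neg_mem hQ) hn
  · rintro ⟨hx, y, hy, ha⟩
    exact ⟨_, -(y + (B x + C x - V.starProjection (B x + C x))), ha,
      ⟨hx, Vᗮ.neg_mem (Vᗮ.add_mem hy hQ)⟩, by abel⟩

variable {B C J : E → E} {x y p r : ℕ → E}

lemma fpihf_mem (hx0 : x 0 ∈ V) (hy0 : y 0 ∈ Vᗮ) (hr : ∀ n, r n = V.starProjection (p n))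
    (hxsucc : ∀ n, x (n + 1) = r n + γ • V.starProjection (B (x n) - B (r n)))
    (hysucc : ∀ n, y (n + 1) = y n - γ⁻¹ • (p n - r n)) (n : ℕ) :
    x n ∈ V ∧ y n ∈ Vᗮ := by
  induction n with
  | zero => exact ⟨hx0, hy0⟩
  | succ n ih =>
    rw [hxsucc, hysucc, hr]
    exact ⟨V.add_mem (V.starProjection_apply_mem _) (V.smul_mem _ (V.starProjection_apply_mem _)),
      Vᗮ.sub_mem ih.2 (Vᗮ.smul_mem _ (V.sub_starProjection_mem_orthogonal _))⟩

lemma fpihf_eq_fbhf (hγ : γ ≠ 0) (hxy : ∀ n, x n ∈ V ∧ y n ∈ Vᗮ)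
    (hp : ∀ n, p n = J (x n + γ • y n - γ • V.starProjection (B (x n) + C (x n))))
    (hr : ∀ n, r n = V.starProjection (p n))
    (hxsucc : ∀ n, x (n + 1) = r n + γ • V.starProjection (B (x n) - B (r n)))
    (hysucc : ∀ n, y (n + 1) = y n - γ⁻¹ • (p n - r n)) {w q : ℕ → E}
    (hw : ∀ n, w n = x n + γ • y n)
    (hq : ∀ n, q n = partialResolvent V J (w n - compress V γ B (w n) - compress V γ C (w n)))
    (n : ℕ) : w (n + 1) = q n + (compress V γ B (w n) - compress V γ B (q n)) := by
  obtain ⟨hx, hy⟩ := hxy n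
  have hPw : V.starProjection (w n) = x n := by rw [hw, starProjection_add_smul V hx hy]
  have hs : w n - compress V γ B (w n) - compress V γ C (w n)
      = x n + γ • y n - γ • V.starProjection (B (x n) + C (x n)) := by
    rw [compress, compress, hPw, hw, map_add, smul_add]; abel
  have hPq : V.starProjection (q n) = r n := by
    rw [hq, starProjection_partialResolvent, hs, ← hp, hr]
  have hqn : q n = r n + r n - p n + γ • y n := by
    rw [hq, hs, partialResolvent, ← hp, map_sub, map_sub, starProjection_add_smul V hx hy,
      map_smul, starProjection_starProjection, ← hr]
    abel
  rw [hw, hxsucc, hysucc, compress, compress, hPw, hPq, hqn, smul_sub, smul_smul,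
    mul_inv_cancel₀ hγ, one_smul, map_sub, smul_sub]
  abel

end ForwardPartialInverseHalfForward

lemma stepsize_condition {β γ L : ℝ} (hβ : 0 < β) (hγ : 0 < γ)
    (hγχ : γ < 4 * β / (1 + Real.sqrt (1 + 16 * β ^ 2 * L ^ 2))) :
    (γ * L) ^ 2 + (2 * (β / γ))⁻¹ < 1 := by
  set S := Real.sqrt (1 + 16 * β ^ 2 * L ^ 2)
  have hS : S ^ 2 = 1 + 16 * β ^ 2 * L ^ 2 := Real.sq_sqrt (by positivity)
  have hS0 : 0 ≤ S := Real.sqrt_nonneg _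
  have h₁ : γ * S < 4 * β - γ := by
    rw [lt_div_iff₀ (by positivity)] at hγχ; linarith
  have h₂ : (γ * S) ^ 2 < (4 * β - γ) ^ 2 := by
    exact pow_lt_pow_left₀ h₁ (by positivity) two_ne_zero
  have h₃ : 16 * β ^ 2 * (γ * L) ^ 2 < 16 * β ^ 2 - 8 * β * γ := by
    rw [mul_pow, hS] at h₂; nlinarith
  have key : (γ * L) ^ 2 + (2 * (β / γ))⁻¹ - 1
      = (16 * β ^ 2 * (γ * L) ^ 2 - (16 * β ^ 2 - 8 * β * γ)) / (16 * β ^ 2) := by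
    field_simp; ring
  have : (γ * L) ^ 2 + (2 * (β / γ))⁻¹ - 1 < 0 := by
    rw [key]; exact div_neg_of_neg_of_pos (by linarith) (by positivity)
  linarith

/-- Convergence of the forward–partial inverse–half-forward splitting method
(Corollary of the main theorem). -/
theorem fpihf_convergence (V : Submodule ℝ H) [CompleteSpace V]
    (A : H → Set H) (B C : H → H) (L β γ : ℝ) (hL : 0 < L) (hβ : 0 < β)
    (hA : MaxMonotoneSV A)
    (hBmon : ∀ x y, 0 ≤ ⟪x - y, B x - B y⟫)
    (hBlip : ∀ x y, ‖B x - B y‖ ≤ L * ‖x - y‖)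
    (hC : ∀ x y, β * ‖C x - C y‖ ^ 2 ≤ ⟪x - y, C x - C y⟫)
    (hzer : ∃ z a n, a ∈ A z ∧ n ∈ normalCone V z ∧ a + B z + C z + n = 0)
    (hγ0 : 0 < γ) (hγχ : γ < 4 * β / (1 + Real.sqrt (1 + 16 * β ^ 2 * L ^ 2)))
    (J : H → H) (hJ : ∀ z, z - J z ∈ (γ • A (J z) : Set H))
    (x y p r : ℕ → H) (hx0 : x 0 ∈ V) (hy0 : y 0 ∈ Vᗮ)
    (hp : ∀ n, p n = J (x n + γ • y n -
      γ • (Submodule.orthogonalProjection V (B (x n) + C (x n)) : H)))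
    (hr : ∀ n, r n = (Submodule.orthogonalProjection V (p n) : H))
    (hxsucc : ∀ n, x (n + 1) = r n + γ • (Submodule.orthogonalProjection V (B (x n) - B (r n)) : H))
    (hysucc : ∀ n, y (n + 1) = y n - γ⁻¹ • (p n - r n)) :
    (∀ n, x n ∈ V) ∧ (∀ n, y n ∈ Vᗮ) ∧
    ∃ xb yb : H, WeakConv x xb ∧ WeakConv y yb ∧
      (∃ a n, a ∈ A xb ∧ n ∈ normalCone V xb ∧ a + B xb + C xb + n = 0) ∧
      yb ∈ Vᗮ ∧ yb - (Submodule.orthogonalProjection V (B xb + C xb) : H) ∈ A xb := by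
  have hxy := fpihf_mem V hx0 hy0 hr hxsucc hysucc
  obtain ⟨z, hz⟩ := hzer
  obtain ⟨hzV, yz, hyz, hAz⟩ := (exists_mem_normalCone_iff V).mp hz
  obtain ⟨wb, hwb, hconv⟩ := fbhf_weakConv (w := fun n => x n + γ • y n)
    ((hA.1.smul hγ0.le).partialInverse V) (IsResolvent.partialInverse V hJ)
    (compress_monotone V hγ0.le hBmon) (compress_cocoercive V hγ0 hβ.le hC) (by positivity)
    (fun n => rfl) (compress_lipschitz V hγ0.le hL.le hBlip) (stepsize_condition hβ hγ0 hγχ)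
    (fpihf_eq_fbhf V hγ0.ne' hxy hp hr hxsucc hysucc (fun n => rfl) (fun n => rfl))
    ⟨z + γ • yz, (neg_compress_mem_partialInverse_iff V hγ0.ne' _).mpr <| by
      rwa [starProjection_add_smul V hzV hyz, add_sub_cancel_left, inv_smul_smul₀ hγ0.ne']⟩
  rw [neg_compress_mem_partialInverse_iff V hγ0.ne'] at hwb
  have hyb : γ⁻¹ • (wb - V.starProjection wb) ∈ Vᗮ :=
    Vᗮ.smul_mem _ (V.sub_starProjection_mem_orthogonal wb)
  refine ⟨fun n => (hxy n).1, fun n => (hxy n).2, V.starProjection wb,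
    γ⁻¹ • (wb - V.starProjection wb), ?_, ?_,
    (exists_mem_normalCone_iff V).mpr ⟨V.starProjection_apply_mem wb, _, hyb, hwb⟩, hyb, hwb⟩
  · convert hconv.map V.starProjection using 1
    funext n
    exact (starProjection_add_smul V (hxy n).1 (hxy n).2 γ).symm
  · convert hconv.map (γ⁻¹ • (ContinuousLinearMap.id ℝ H - V.starProjection)) using 1
    · funext n
      simp [starProjection_add_smul V (hxy n).1 (hxy n).2, smul_smul, inv_mul_cancel₀ hγ0.ne']
    · simp
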